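/- arXiv:2003.00085 — 5 statements merged into one kernel-verified Lean document; each statement's English description precedes it below -/
import Mathlib

section
/- Let (V_m)_{m≥1} be a sequence of positive real numbers that is subadditive, i.e. V_{m+n} ≤ V_m + V_n for all m, n ≥ 1. Then ∑_{i≥1} V_{2^i}²/2^i ≤ 65 · ∑_{k≥1} V_k²/k². -/
open MeasureTheory ProbabilityTheory Filter
open scoped ENNReal NNReal Topology

noncomputable section

/-- The σ-algebra generated by the random variables `ξ k`, `k ∈ I`. -/
def sigmaOf {Ω S : Type*} [MeasurableSpace S] (ξ : ℤ → Ω → S) (I : Set ℤ) :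
    MeasurableSpace Ω :=
  ⨆ k ∈ I, MeasurableSpace.comap (ξ k) inferInstance

/-- The σ-algebra generated by the pair `(ξ i, ξ j)`. -/
def pairSigma {Ω S : Type*} [MeasurableSpace S] (ξ : ℤ → Ω → S) (i j : ℤ) :
    MeasurableSpace Ω :=
  MeasurableSpace.comap (ξ i) inferInstance ⊔ MeasurableSpace.comap (ξ j) inferInstance

/-- Conditional independence of the σ-algebras `m₁` and `m₂` given `m'`. -/
def CondIndepGiven {Ω : Type*} [MeasurableSpace Ω] (μ : Measure Ω)
    (m' m₁ m₂ : MeasurableSpace Ω) : Prop :=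
  ∀ A B : Set Ω, MeasurableSet[m₁] A → MeasurableSet[m₂] B →
    μ[(A ∩ B).indicator (fun _ => (1 : ℝ)) | m'] =ᵐ[μ]
      fun ω => (μ[A.indicator (fun _ => (1 : ℝ)) | m']) ω *
        (μ[B.indicator (fun _ => (1 : ℝ)) | m']) ω

/-- Markov property: for every `n`, the past `σ(ξ k, k ≤ n)` and the future
`σ(ξ k, k ≥ n)` are conditionally independent given `σ(ξ n)`. -/
def IsMarkovChain {Ω S : Type*} [MeasurableSpace Ω] [MeasurableSpace S]
    (μ : Measure Ω) (ξ : ℤ → Ω → S) : Prop :=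
  ∀ n : ℤ, CondIndepGiven μ (MeasurableSpace.comap (ξ n) inferInstance)
    (sigmaOf ξ {k | k ≤ n}) (sigmaOf ξ {k | n ≤ k})

/-- Stationarity: `(ξ (n+1))_n` has the same law as `(ξ n)_n`. -/
def IsStationaryZ {Ω S : Type*} [MeasurableSpace Ω] [MeasurableSpace S]
    (μ : Measure Ω) (ξ : ℤ → Ω → S) : Prop :=
  Measure.map (fun ω (n : ℤ) => ξ (n + 1) ω) μ = Measure.map (fun ω (n : ℤ) => ξ n ω) μ

/-- The left shift on path space `S^ℤ`. -/
def shiftZ {S : Type*} (x : ℤ → S) : ℤ → S := fun n => x (n + 1)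

/-- Total ergodicity: every iterate of the shift is ergodic for the law of the chain. -/
def TotallyErgodic {Ω S : Type*} [MeasurableSpace Ω] [MeasurableSpace S]
    (μ : Measure Ω) (ξ : ℤ → Ω → S) : Prop :=
  ∀ k : ℕ, 0 < k → Ergodic (shiftZ^[k]) (Measure.map (fun ω (n : ℤ) => ξ n ω) μ)

/-- Partial sums `S_n = f(ξ 1) + ⋯ + f(ξ n)`. -/
def pS {Ω S : Type*} (ξ : ℤ → Ω → S) (f : S → ℝ) (n : ℕ) (ω : Ω) : ℝ :=
  ∑ i ∈ Finset.Icc 1 n, f (ξ (i : ℤ) ω)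

/-- Convergence in distribution (weak convergence of the laws) of real random
variables to the measure `ν`. -/
def TendstoInDistribution {Ω : Type*} [MeasurableSpace Ω] (μ : Measure Ω)
    (Y : ℕ → Ω → ℝ) (ν : Measure ℝ) : Prop :=
  ∀ g : BoundedContinuousFunction ℝ ℝ,
    Tendsto (fun n => ∫ ω, g (Y n ω) ∂μ) atTop (𝓝 (∫ x, g x ∂ν))

/-!
Writing `4N = k + (4N - k)` for the `N` values `k ∈ [N, 2N)` and averaging
`V_{4N}² ≤ 2 V_k² + 2 V_{4N-k}²` bounds `V_{4N}²/(4N)` by a constant times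
`∑_{N ≤ n ≤ 3N} V_n²/n²`. For `N = 2^i` these windows cover every dyadic block
`[2^j, 2^{j+1})` at most twice, and the term `V_2²/2 ≤ 2 V_1²` is handled directly.
-/

open Finset

/-- At `n = 0` this divides by zero in `ℝ≥0∞` (giving `⊤` unless `V 0 = 0`), so it is only
ever summed over `n ≥ 1`. -/
def sqDivSq (V : ℕ → ℝ) (n : ℕ) : ℝ≥0∞ :=
  ENNReal.ofReal (V n ^ 2) / (n : ℝ≥0∞) ^ 2

theorem ofReal_sq_le_two_mul_add {x y z : ℝ} (hx : 0 ≤ x) (h : x ≤ y + z) :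
    ENNReal.ofReal (x ^ 2) ≤ 2 * ENNReal.ofReal (y ^ 2) + 2 * ENNReal.ofReal (z ^ 2) := by
  have hsq : x ^ 2 ≤ 2 * y ^ 2 + 2 * z ^ 2 := by nlinarith [sq_nonneg (y - z)]
  calc ENNReal.ofReal (x ^ 2)
      ≤ ENNReal.ofReal (2 * y ^ 2) + ENNReal.ofReal (2 * z ^ 2) :=
        (ENNReal.ofReal_le_ofReal hsq).trans ENNReal.ofReal_add_le
    _ = 2 * ENNReal.ofReal (y ^ 2) + 2 * ENNReal.ofReal (z ^ 2) := by
        rw [ENNReal.ofReal_mul zero_le_two, ENNReal.ofReal_mul zero_le_two, ENNReal.ofReal_ofNat]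

theorem ofReal_sq_le_of_subadditive {V : ℕ → ℝ} (hpos : ∀ m, 1 ≤ m → 0 < V m)
    (hsub : ∀ m n, 1 ≤ m → 1 ≤ n → V (m + n) ≤ V m + V n) {k M : ℕ} (hk : 1 ≤ k)
    (hkM : k < M) :
    ENNReal.ofReal (V M ^ 2) ≤
      2 * ENNReal.ofReal (V k ^ 2) + 2 * ENNReal.ofReal (V (M - k) ^ 2) := by
  refine ofReal_sq_le_two_mul_add (hpos M (by omega)).le ?_
  simpa [Nat.add_sub_cancel' hkM.le] using hsub k (M - k) hk (by omega)

theorem natCast_mul_ofReal_sq_le_sum {V : ℕ → ℝ} (hpos : ∀ m, 1 ≤ m → 0 < V m)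
    (hsub : ∀ m n, 1 ≤ m → 1 ≤ n → V (m + n) ≤ V m + V n) (N : ℕ) :
    N * ENNReal.ofReal (V (4 * N) ^ 2) ≤
      4 * ∑ n ∈ Icc N (3 * N), ENNReal.ofReal (V n ^ 2) := by
  set b : ℕ → ℝ≥0∞ := fun n => ENNReal.ofReal (V n ^ 2)
  have hlow : ∑ k ∈ Ico N (2 * N), b k ≤ ∑ n ∈ Icc N (3 * N), b n :=
    sum_le_sum_of_subset fun k hk => by simp only [mem_Ico, mem_Icc] at hk ⊢; omega
  have hhigh : ∑ k ∈ Ico N (2 * N), b (4 * N - k) ≤ ∑ n ∈ Icc N (3 * N), b n := by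
    rw [sum_Ico_reflect b N (by omega)]
    exact sum_le_sum_of_subset fun n hn => by simp only [mem_Ico, mem_Icc] at hn ⊢; omega
  calc N * b (4 * N) = ∑ k ∈ Ico N (2 * N), b (4 * N) := by
        rw [sum_const, Nat.card_Ico, nsmul_eq_mul, show 2 * N - N = N by omega]
    _ ≤ ∑ k ∈ Ico N (2 * N), (2 * b k + 2 * b (4 * N - k)) := by
        refine sum_le_sum fun k hk => ?_
        rw [mem_Ico] at hk
        exact ofReal_sq_le_of_subadditive hpos hsub (by omega) (by omega)
    _ = 2 * ∑ k ∈ Ico N (2 * N), b k + 2 * ∑ k ∈ Ico N (2 * N), b (4 * N - k) := by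
        rw [sum_add_distrib, mul_sum, mul_sum]
    _ ≤ 2 * ∑ n ∈ Icc N (3 * N), b n + 2 * ∑ n ∈ Icc N (3 * N), b n := by
        grw [hlow, hhigh]
    _ = 4 * ∑ n ∈ Icc N (3 * N), b n := by ring

theorem ofReal_sq_le_mul_sqDivSq (V : ℕ → ℝ) {n L : ℕ} (hn : 1 ≤ n) (hnL : n ≤ L) :
    ENNReal.ofReal (V n ^ 2) ≤ (L : ℝ≥0∞) ^ 2 * sqDivSq V n := by
  calc ENNReal.ofReal (V n ^ 2) = (n : ℝ≥0∞) ^ 2 * sqDivSq V n := by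
        rw [sqDivSq, ENNReal.mul_div_cancel (by positivity) (by simp)]
    _ ≤ (L : ℝ≥0∞) ^ 2 * sqDivSq V n := by gcongr

theorem ofReal_sq_div_le_sum_sqDivSq {V : ℕ → ℝ} (hpos : ∀ m, 1 ≤ m → 0 < V m)
    (hsub : ∀ m n, 1 ≤ m → 1 ≤ n → V (m + n) ≤ V m + V n) {N : ℕ} (hN : 1 ≤ N) :
    ENNReal.ofReal (V (4 * N) ^ 2) / ((4 * N : ℕ) : ℝ≥0∞) ≤
      9 * ∑ n ∈ Icc N (3 * N), sqDivSq V n := by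
  set S := ∑ n ∈ Icc N (3 * N), sqDivSq V n
  have hN0 : (N : ℝ≥0∞) ≠ 0 := by exact_mod_cast (by omega : N ≠ 0)
  have hmul : (N : ℝ≥0∞) * ENNReal.ofReal (V (4 * N) ^ 2) ≤ N * (36 * N * S) :=
    calc (N : ℝ≥0∞) * ENNReal.ofReal (V (4 * N) ^ 2)
        ≤ 4 * ∑ n ∈ Icc N (3 * N), ((3 * N : ℕ) : ℝ≥0∞) ^ 2 * sqDivSq V n := by
          grw [natCast_mul_ofReal_sq_le_sum hpos hsub N]
          gcongr with n hn
          rw [mem_Icc] at hn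
          exact ofReal_sq_le_mul_sqDivSq V (by omega) hn.2
      _ = N * (36 * N * S) := by rw [← mul_sum]; push_cast; ring
  refine ENNReal.div_le_of_le_mul ?_
  calc ENNReal.ofReal (V (4 * N) ^ 2) ≤ 36 * N * S :=
        (ENNReal.mul_le_mul_iff_right hN0 (ENNReal.natCast_ne_top N)).mp hmul
    _ = 9 * S * ((4 * N : ℕ) : ℝ≥0∞) := by push_cast; ring

theorem ENNReal.tsum_sum_Ico_le_tsum (f : ℕ → ℝ≥0∞) {g : ℕ → ℕ} (hg : Monotone g)
    {m : ℕ} (hm : m ≤ g 0) :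
    ∑' i, ∑ n ∈ Ico (g i) (g (i + 1)), f n ≤ ∑' k, f (k + m) := by
  refine ENNReal.tsum_le_of_sum_range_le fun I => ?_
  have htelescope :
      ∑ i ∈ range I, ∑ n ∈ Ico (g i) (g (i + 1)), f n = ∑ n ∈ Ico (g 0) (g I), f n := by
    induction I with
    | zero => simp
    | succ I ih =>
      rw [sum_range_succ, ih, sum_Ico_consecutive f (hg (Nat.zero_le I)) (hg I.le_succ)]
  calc ∑ i ∈ range I, ∑ n ∈ Ico (g i) (g (i + 1)), f n
      ≤ ∑ n ∈ Ico m (g I), f n := htelescope ▸ sum_le_sum_of_subset (Ico_subset_Ico_left hm)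
    _ = ∑ k ∈ range (g I - m), f (k + m) := by simp only [sum_Ico_eq_sum_range, add_comm m]
    _ ≤ ∑' k, f (k + m) := ENNReal.sum_le_tsum _

theorem sum_Icc_le_sum_Ico_add_sum_Ico (f : ℕ → ℝ≥0∞) {N : ℕ} (hN : 1 ≤ N) :
    ∑ n ∈ Icc N (3 * N), f n ≤
      ∑ n ∈ Ico N (2 * N), f n + ∑ n ∈ Ico (2 * N) (4 * N), f n := by
  rw [sum_Ico_consecutive f (by omega) (by omega)]
  exact sum_le_sum_of_subset fun n hn => by simp only [mem_Icc, mem_Ico] at hn ⊢; omega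

theorem tsum_ofReal_sq_div_two_pow_le {V : ℕ → ℝ} (hpos : ∀ m, 1 ≤ m → 0 < V m)
    (hsub : ∀ m n, 1 ≤ m → 1 ≤ n → V (m + n) ≤ V m + V n) :
    ∑' i : ℕ, ENNReal.ofReal (V (2 ^ (i + 2)) ^ 2) / (2 : ℝ≥0∞) ^ (i + 2) ≤
      18 * ∑' k : ℕ, sqDivSq V (k + 1) := by
  set T := ∑' k : ℕ, sqDivSq V (k + 1)
  have hblocks : ∑' i, ∑ n ∈ Ico (2 ^ i) (2 ^ (i + 1)), sqDivSq V n ≤ T :=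
    ENNReal.tsum_sum_Ico_le_tsum _ (pow_right_monotone one_le_two) le_rfl
  have hblocks' : ∑' i, ∑ n ∈ Ico (2 ^ (i + 1)) (2 ^ (i + 2)), sqDivSq V n ≤ T :=
    ENNReal.tsum_sum_Ico_le_tsum _ (g := fun i => 2 ^ (i + 1))
      ((pow_right_monotone one_le_two).comp fun _ _ h => Nat.succ_le_succ h) Nat.one_le_two_pow
  calc ∑' i : ℕ, ENNReal.ofReal (V (2 ^ (i + 2)) ^ 2) / (2 : ℝ≥0∞) ^ (i + 2)
      ≤ ∑' i : ℕ, 9 * (∑ n ∈ Ico (2 ^ i) (2 ^ (i + 1)), sqDivSq V n +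
          ∑ n ∈ Ico (2 ^ (i + 1)) (2 ^ (i + 2)), sqDivSq V n) := by
        refine ENNReal.tsum_le_tsum fun i => ?_
        have h4 : 2 ^ (i + 2) = 4 * 2 ^ i := by ring
        have h4' : (2 : ℝ≥0∞) ^ (i + 2) = ((4 * 2 ^ i : ℕ) : ℝ≥0∞) := by
          push_cast; ring
        have h2 : 2 ^ (i + 1) = 2 * 2 ^ i := by ring
        rw [h4, h4', h2]
        grw [ofReal_sq_div_le_sum_sqDivSq hpos hsub Nat.one_le_two_pow,
          sum_Icc_le_sum_Ico_add_sum_Ico _ Nat.one_le_two_pow]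
    _ = 9 * (∑' i, ∑ n ∈ Ico (2 ^ i) (2 ^ (i + 1)), sqDivSq V n +
          ∑' i, ∑ n ∈ Ico (2 ^ (i + 1)) (2 ^ (i + 2)), sqDivSq V n) := by
        rw [ENNReal.tsum_mul_left, ENNReal.tsum_add]
    _ ≤ 9 * (T + T) := by grw [hblocks, hblocks']
    _ = 18 * T := by ring

theorem ofReal_sq_two_div_two_le {V : ℕ → ℝ} (hpos : ∀ m, 1 ≤ m → 0 < V m)
    (hsub : ∀ m n, 1 ≤ m → 1 ≤ n → V (m + n) ≤ V m + V n) :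
    ENNReal.ofReal (V 2 ^ 2) / 2 ≤ 2 * sqDivSq V 1 := by
  refine ENNReal.div_le_of_le_mul ?_
  calc ENNReal.ofReal (V 2 ^ 2) ≤ 2 * ENNReal.ofReal (V 1 ^ 2) + 2 * ENNReal.ofReal (V 1 ^ 2) :=
        ofReal_sq_le_of_subadditive hpos hsub le_rfl one_lt_two
    _ = 2 * sqDivSq V 1 * 2 := by simp [sqDivSq]; ring

theorem stmt7 (V : ℕ → ℝ) (hpos : ∀ m, 1 ≤ m → 0 < V m)
    (hsub : ∀ m n, 1 ≤ m → 1 ≤ n → V (m + n) ≤ V m + V n) :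
    ∑' i : ℕ, ENNReal.ofReal (V (2 ^ (i + 1)) ^ 2) / (2 : ℝ≥0∞) ^ (i + 1) ≤
      65 * ∑' k : ℕ, ENNReal.ofReal (V (k + 1) ^ 2) / ((k : ℝ≥0∞) + 1) ^ 2 := by
  set T := ∑' k : ℕ, sqDivSq V (k + 1)
  have hT : ∑' k : ℕ, ENNReal.ofReal (V (k + 1) ^ 2) / ((k : ℝ≥0∞) + 1) ^ 2 = T := by
    simp [T, sqDivSq]
  rw [hT, tsum_eq_zero_add' ENNReal.summable]
  calc ENNReal.ofReal (V (2 ^ 1) ^ 2) / 2 ^ 1 +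
        ∑' i : ℕ, ENNReal.ofReal (V (2 ^ (i + 2)) ^ 2) / (2 : ℝ≥0∞) ^ (i + 2)
      ≤ 2 * sqDivSq V 1 + 18 * T := by
        grw [← tsum_ofReal_sq_div_two_pow_le hpos hsub, ← ofReal_sq_two_div_two_le hpos hsub]
        simp
    _ ≤ 2 * T + 18 * T := by grw [ENNReal.le_tsum 0 (f := fun k => sqDivSq V (k + 1))]
    _ ≤ 65 * T := by rw [← add_mul]; gcongr; norm_num

end
end

section
/- Let (V_m)_{m≥1} be a sequence of positive real numbers that is subadditive, i.e. V_{m+n} ≤ V_m + V_n for all m, n ≥ 1. Then ∑_{r≥1} V_{4^r}²/4^r ≤ 64 · ∑_{n≥1} V_n²/n². -/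
open MeasureTheory ProbabilityTheory Filter
open scoped ENNReal NNReal Topology

noncomputable section

/-!
Subadditivity gives `V (4a) ≤ V k + V (4a - k)`, and for `a < k < 3a` both `k` and `4a - k` lie in
`(a, 3a)`. Averaging the squared inequality over these `k` bounds `V (4a)² / (4a)` by `9` times the
block sum of `V k² / k²` over `(a, 3a)`. For `a = 4 ^ r` the blocks sit in the disjoint ranges
`[4 ^ r, 4 ^ (r + 1))`, so summing over `r` gives the inequality even with `9` in place of `64`.
-/

open Finset

theorem sum_range_sum_Ico_of_monotone {M : Type*} [AddCommMonoid M] (f : ℕ → M) {u : ℕ → ℕ}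
    (hu : Monotone u) (R : ℕ) :
    ∑ r ∈ range R, ∑ k ∈ Ico (u r) (u (r + 1)), f k = ∑ k ∈ Ico (u 0) (u R), f k := by
  induction R with
  | zero => simp
  | succ R ih =>
    rw [sum_range_succ, ih, sum_Ico_consecutive f (hu R.zero_le) (hu R.le_succ)]

theorem ENNReal.ofReal_div_natCast (x : ℝ) {m : ℕ} (hm : m ≠ 0) :
    ENNReal.ofReal (x / m) = ENNReal.ofReal x / m := by
  rw [ENNReal.ofReal_div_of_pos (by positivity), ENNReal.ofReal_natCast]

theorem card_Ioo_mul_sq_le_of_subadditive {V : ℕ → ℝ} (hpos : ∀ m, 1 ≤ m → 0 < V m)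
    (hsub : ∀ m n, 1 ≤ m → 1 ≤ n → V (m + n) ≤ V m + V n) (a b : ℕ) :
    (#(Ioo a b) : ℝ) * V (a + b) ^ 2 ≤ 4 * ∑ k ∈ Ioo a b, V k ^ 2 := by
  have hreflect : ∑ k ∈ Ioo a b, V (a + b - k) ^ 2 = ∑ k ∈ Ioo a b, V k ^ 2 :=
    sum_nbij' (fun k => a + b - k) (fun k => a + b - k)
      (fun k hk => by rw [mem_Ioo] at hk ⊢; omega)
      (fun k hk => by rw [mem_Ioo] at hk ⊢; omega)
      (fun k hk => by rw [mem_Ioo] at hk; omega)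
      (fun k hk => by rw [mem_Ioo] at hk; omega)
      (fun k hk => rfl)
  have hsplit : ∀ k ∈ Ioo a b, V (a + b) ^ 2 ≤ 2 * V k ^ 2 + 2 * V (a + b - k) ^ 2 := by
    intro k hk
    rw [mem_Ioo] at hk
    have hV : V (a + b) ≤ V k + V (a + b - k) := by
      simpa [show k + (a + b - k) = a + b by omega] using hsub k (a + b - k) (by omega) (by omega)
    have hV0 : 0 ≤ V (a + b) := (hpos _ (by omega)).le
    nlinarith [sq_nonneg (V k - V (a + b - k))]
  calc (#(Ioo a b) : ℝ) * V (a + b) ^ 2 = ∑ k ∈ Ioo a b, V (a + b) ^ 2 := by simp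
    _ ≤ ∑ k ∈ Ioo a b, (2 * V k ^ 2 + 2 * V (a + b - k) ^ 2) := sum_le_sum hsplit
    _ = 4 * ∑ k ∈ Ioo a b, V k ^ 2 := by
      rw [sum_add_distrib, ← mul_sum, ← mul_sum, hreflect]; ring

theorem sq_div_le_sum_sq_div_sq_of_subadditive {V : ℕ → ℝ} (hpos : ∀ m, 1 ≤ m → 0 < V m)
    (hsub : ∀ m n, 1 ≤ m → 1 ≤ n → V (m + n) ≤ V m + V n) {a : ℕ} (ha : 1 ≤ a) :
    V (4 * a) ^ 2 / (4 * a : ℕ) ≤ 9 * ∑ k ∈ Ioo a (3 * a), V k ^ 2 / (k : ℝ) ^ 2 := by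
  have hcard := card_Ioo_mul_sq_le_of_subadditive hpos hsub a (3 * a)
  rw [Nat.card_Ioo, show a + 3 * a = 4 * a by ring] at hcard
  have hcard_ge : (a : ℝ) ≤ ((3 * a - a - 1 : ℕ) : ℝ) := by
    exact_mod_cast (by omega : a ≤ 3 * a - a - 1)
  have hterm : ∀ k ∈ Ioo a (3 * a), V k ^ 2 ≤ 9 * (a : ℝ) ^ 2 * (V k ^ 2 / (k : ℝ) ^ 2) := by
    intro k hk
    rw [mem_Ioo] at hk
    have hk0 : (0 : ℝ) < k := by exact_mod_cast (by omega : 0 < k)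
    have hk3 : (k : ℝ) ≤ 3 * a := by exact_mod_cast hk.2.le
    rw [mul_div_assoc', le_div_iff₀ (by positivity)]
    have : (k : ℝ) ^ 2 ≤ 9 * a ^ 2 := by nlinarith
    nlinarith [sq_nonneg (V k)]
  have ha0 : (0 : ℝ) < a := by exact_mod_cast ha
  rw [div_le_iff₀ (by push_cast; positivity), ← mul_le_mul_iff_right₀ ha0]
  push_cast
  calc (a : ℝ) * V (4 * a) ^ 2 ≤ ((3 * a - a - 1 : ℕ) : ℝ) * V (4 * a) ^ 2 := by gcongr
    _ ≤ 4 * ∑ k ∈ Ioo a (3 * a), V k ^ 2 := hcard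
    _ ≤ 4 * (9 * (a : ℝ) ^ 2 * ∑ k ∈ Ioo a (3 * a), V k ^ 2 / (k : ℝ) ^ 2) := by
      gcongr; rw [mul_sum]; exact sum_le_sum hterm
    _ = a * ((9 * ∑ k ∈ Ioo a (3 * a), V k ^ 2 / (k : ℝ) ^ 2) * (4 * a)) := by ring

theorem ofReal_sq_div_le_sum_of_subadditive {V : ℕ → ℝ} (hpos : ∀ m, 1 ≤ m → 0 < V m)
    (hsub : ∀ m n, 1 ≤ m → 1 ≤ n → V (m + n) ≤ V m + V n) {a : ℕ} (ha : 1 ≤ a) :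
    ENNReal.ofReal (V (4 * a) ^ 2) / (4 * a : ℕ) ≤
      9 * ∑ k ∈ Ioo a (3 * a), ENNReal.ofReal (V k ^ 2) / (k : ℝ≥0∞) ^ 2 := by
  have hterm : ∀ k ∈ Ioo a (3 * a), ENNReal.ofReal (V k ^ 2) / (k : ℝ≥0∞) ^ 2 =
      ENNReal.ofReal (V k ^ 2 / (k : ℝ) ^ 2) := by
    intro k hk
    rw [mem_Ioo] at hk
    rw [← Nat.cast_pow, ← ENNReal.ofReal_div_natCast _ (pow_ne_zero 2 (by omega)), Nat.cast_pow]
  rw [sum_congr rfl hterm, ← ENNReal.ofReal_sum_of_nonneg (fun k _ => by positivity),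
    ← ENNReal.ofReal_div_natCast _ (by omega), ← ENNReal.ofReal_ofNat 9,
    ← ENNReal.ofReal_mul (by norm_num)]
  exact ENNReal.ofReal_le_ofReal (sq_div_le_sum_sq_div_sq_of_subadditive hpos hsub ha)

theorem stmt9 (V : ℕ → ℝ) (hpos : ∀ m, 1 ≤ m → 0 < V m)
    (hsub : ∀ m n, 1 ≤ m → 1 ≤ n → V (m + n) ≤ V m + V n) :
    ∑' r : ℕ, ENNReal.ofReal (V (4 ^ (r + 1)) ^ 2) / (4 : ℝ≥0∞) ^ (r + 1) ≤
      64 * ∑' n : ℕ, ENNReal.ofReal (V (n + 1) ^ 2) / ((n : ℝ≥0∞) + 1) ^ 2 := by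
  set f : ℕ → ℝ≥0∞ := fun k => ENNReal.ofReal (V k ^ 2) / (k : ℝ≥0∞) ^ 2
  have hblock : ∀ r, ENNReal.ofReal (V (4 ^ (r + 1)) ^ 2) / (4 : ℝ≥0∞) ^ (r + 1) ≤
      9 * ∑ k ∈ Ico (4 ^ r) (4 ^ (r + 1)), f k := by
    intro r
    have h := ofReal_sq_div_le_sum_of_subadditive hpos hsub (Nat.one_le_pow r 4 (by norm_num))
    rw [← pow_succ'] at h
    push_cast at h
    exact h.trans (mul_le_mul_right (sum_le_sum_of_subset
      (Ioo_subset_Ico_self.trans (Ico_subset_Ico_right (by omega)))) 9)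
  have hpartial : ∀ R, ∑ r ∈ range R, ∑ k ∈ Ico (4 ^ r) (4 ^ (r + 1)), f k ≤ ∑' n, f (n + 1) := by
    intro R
    rw [sum_range_sum_Ico_of_monotone f (pow_right_mono₀ (by norm_num)) R, pow_zero,
      sum_Ico_eq_sum_range]
    simp_rw [add_comm 1]
    exact ENNReal.sum_le_tsum _
  calc ∑' r : ℕ, ENNReal.ofReal (V (4 ^ (r + 1)) ^ 2) / (4 : ℝ≥0∞) ^ (r + 1)
      ≤ 9 * ∑' n, f (n + 1) := ENNReal.tsum_le_of_sum_range_le fun R =>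
        (sum_le_sum fun r _ => hblock r).trans (by rw [← mul_sum]; gcongr; exact hpartial R)
    _ ≤ 64 * ∑' n : ℕ, ENNReal.ofReal (V (n + 1) ^ 2) / ((n : ℝ≥0∞) + 1) ^ 2 := by
      gcongr
      · norm_num
      · simp [f]

end
end

section
/- Let (ξ_n)_{n∈ℤ} be a stationary Markov chain and f ∈ L²_0(π). Then the sequence (‖E(S_n|ξ_0,ξ_n)‖)_{n≥1} is subadditive: for all positive integers m and n, ‖E(S_{n+m}|ξ_0,ξ_{n+m})‖ ≤ ‖E(S_n|ξ_0,ξ_n)‖ + ‖E(S_m|ξ_0,ξ_m)‖. -/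
open MeasureTheory ProbabilityTheory Filter
open scoped ENNReal NNReal Topology

noncomputable section

/-!
Write `S_{n+m} = S_n + T` with `T = f(ξ_{n+1}) + ⋯ + f(ξ_{n+m})`. By the Markov property at
time `n`, adding `ξ_{n+m}` to `(ξ_0, ξ_n)` does not change the conditional expectation of the past
variable `S_n`, and adding `ξ_0` to `(ξ_n, ξ_{n+m})` does not change that of the future variable
`T`. Since conditioning on the smaller σ-algebra `σ(ξ_0, ξ_{n+m})` contracts the `L²` norm, the
triangle inequality gives `‖E(S_{n+m}|ξ_0,ξ_{n+m})‖ ≤ ‖E(S_n|ξ_0,ξ_n)‖ + ‖E(T|ξ_n,ξ_{n+m})‖`, and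
stationarity identifies the last term with `‖E(S_m|ξ_0,ξ_m)‖`.

The Markov step rests on the fact that conditional independence of past and future given `ξ_n`
yields `E(1_B | past) = E(1_B | ξ_n)` for every future event `B`; the identity
`E(X | 𝒜 ⊔ ℬ) = E(X | 𝒜)` is then checked on the π-system of intersections `A ∩ B`.
-/

theorem Finset.sum_Icc_one_add {M : Type*} [AddCommMonoid M] (f : ℕ → M) (n m : ℕ) :
    ∑ i ∈ Icc 1 (n + m), f i = ∑ i ∈ Icc 1 n, f i + ∑ i ∈ Icc 1 m, f (i + n) := by
  induction m with
  | zero => simp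
  | succ m ih =>
    rw [← add_assoc, sum_Icc_succ_top (by omega), ih, sum_Icc_succ_top (by omega), add_assoc,
      add_right_comm m 1 n, add_comm n m]

section PiSystem

variable {α : Type*} {m m0 : MeasurableSpace α}

theorem isPiSystem_inter_measurableSet (m₁ m₂ : MeasurableSpace α) :
    IsPiSystem {s | ∃ A B, MeasurableSet[m₁] A ∧ MeasurableSet[m₂] B ∧ A ∩ B = s} := by
  rintro _ ⟨A, B, hA, hB, rfl⟩ _ ⟨A', B', hA', hB', rfl⟩ -
  exact ⟨A ∩ A', B ∩ B', hA.inter hA', hB.inter hB', Set.inter_inter_inter_comm A A' B B'⟩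

theorem sup_eq_generateFrom_inter_measurableSet (m₁ m₂ : MeasurableSpace α) :
    m₁ ⊔ m₂ = MeasurableSpace.generateFrom
      {s | ∃ A B, MeasurableSet[m₁] A ∧ MeasurableSet[m₂] B ∧ A ∩ B = s} := by
  refine le_antisymm (sup_le (fun A hA => ?_) (fun B hB => ?_)) (MeasurableSpace.generateFrom_le ?_)
  · exact MeasurableSpace.measurableSet_generateFrom ⟨A, .univ, hA, .univ, Set.inter_univ A⟩
  · exact MeasurableSpace.measurableSet_generateFrom ⟨.univ, B, .univ, hB, Set.univ_inter B⟩
  · rintro _ ⟨A, B, hA, hB, rfl⟩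
    exact (le_sup_left (b := m₂) A hA).inter (le_sup_right (a := m₁) B hB)

theorem setIntegral_eq_of_isPiSystem {μ : Measure α} {f g : α → ℝ} {C : Set (Set α)}
    (hm : m ≤ m0) (h_eq : m = MeasurableSpace.generateFrom C) (hC : IsPiSystem C)
    (hf : Integrable f μ) (hg : Integrable g μ) (h_univ : ∫ x, f x ∂μ = ∫ x, g x ∂μ)
    (basic : ∀ t ∈ C, ∫ x in t, f x ∂μ = ∫ x in t, g x ∂μ) {t : Set α}
    (ht : MeasurableSet[m] t) : ∫ x in t, f x ∂μ = ∫ x in t, g x ∂μ := by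
  induction t, ht using MeasurableSpace.induction_on_inter h_eq hC with
  | empty => simp
  | basic t ht => exact basic t ht
  | compl t ht iht =>
    have hf' := integral_add_compl (hm t ht) hf
    have hg' := integral_add_compl (hm t ht) hg
    linarith
  | iUnion s hdisj hs ihs =>
    rw [integral_iUnion (fun i => hm _ (hs i)) hdisj hf.integrableOn,
      integral_iUnion (fun i => hm _ (hs i)) hdisj hg.integrableOn]
    exact tsum_congr ihs

end PiSystem

section CondIndepGiven

variable {Ω : Type*} {m m' mP mF mA mB : MeasurableSpace Ω} [m0 : MeasurableSpace Ω]
  {μ : Measure Ω}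

theorem CondIndepGiven.symm (h : CondIndepGiven μ m' mP mF) : CondIndepGiven μ m' mF mP :=
  fun A B hA hB => by
    simpa only [Set.inter_comm B A, mul_comm] using h B A hB hA

variable [IsFiniteMeasure μ]

theorem CondIndepGiven.condExp_indicator_ae_eq (h : CondIndepGiven μ m' mP mF)
    (hm'P : m' ≤ mP) (hmP : mP ≤ m0) (hmF : mF ≤ m0) {B : Set Ω} (hB : MeasurableSet[mF] B) :
    μ[B.indicator (fun _ => (1 : ℝ)) | mP] =ᵐ[μ] μ[B.indicator (fun _ => (1 : ℝ)) | m'] := by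
  have hm' : m' ≤ m0 := hm'P.trans hmP
  have hB_int : Integrable (B.indicator fun _ => (1 : ℝ)) μ :=
    (integrable_const 1).indicator (hmF B hB)
  refine (ae_eq_condExp_of_forall_setIntegral_eq hmP hB_int
    (fun _ _ _ => integrable_condExp.integrableOn) (fun A hA _ => ?_)
    (stronglyMeasurable_condExp.mono hm'P).aestronglyMeasurable).symm
  set c := μ[B.indicator (fun _ => (1 : ℝ)) | m']
  have hAc : A.indicator c = A.indicator (fun _ => (1 : ℝ)) * c := by
    ext x; by_cases hx : x ∈ A <;> simp [hx]
  calc ∫ x in A, c x ∂μ = ∫ x, (A.indicator (fun _ => (1 : ℝ)) * c) x ∂μ := by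
        rw [← hAc, integral_indicator (hmP A hA)]
    _ = ∫ x, (μ[A.indicator (fun _ => (1 : ℝ)) | m'] * c) x ∂μ := by
        rw [← integral_condExp hm']
        refine integral_congr_ae (condExp_mul_of_stronglyMeasurable_right
          stronglyMeasurable_condExp ?_ ((integrable_const 1).indicator (hmP A hA)))
        exact hAc ▸ integrable_condExp.indicator (hmP A hA)
    _ = ∫ x, μ[(A ∩ B).indicator (fun _ => (1 : ℝ)) | m'] x ∂μ :=
        integral_congr_ae (h A B hA hB).symm
    _ = ∫ x in A, B.indicator (fun _ => (1 : ℝ)) x ∂μ := by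
        rw [integral_condExp hm', ← Set.indicator_indicator, integral_indicator (hmP A hA)]

theorem CondIndepGiven.setIntegral_inter_eq (h : CondIndepGiven μ m' mP mF)
    (hm'P : m' ≤ mP) (hmP : mP ≤ m0) (hmF : mF ≤ m0) {A B : Set Ω} (hA : MeasurableSet[mP] A)
    (hB : MeasurableSet[mF] B) {Z : Ω → ℝ} (hZ : Integrable Z μ) (hZm : StronglyMeasurable[mP] Z) :
    ∫ x in A ∩ B, Z x ∂μ = ∫ x in A, Z x * μ[B.indicator (fun _ => (1 : ℝ)) | m'] x ∂μ := by
  have hZB : Z * B.indicator (fun _ => (1 : ℝ)) = B.indicator Z := by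
    ext x; by_cases hx : x ∈ B <;> simp [hx]
  have hZB_int : Integrable (Z * B.indicator (fun _ => (1 : ℝ))) μ :=
    hZB ▸ hZ.indicator (hmF B hB)
  calc ∫ x in A ∩ B, Z x ∂μ = ∫ x in A, (Z * B.indicator (fun _ => (1 : ℝ))) x ∂μ := by
        rw [hZB, setIntegral_indicator (hmF B hB)]
    _ = ∫ x in A, μ[Z * B.indicator (fun _ => (1 : ℝ)) | mP] x ∂μ :=
        (setIntegral_condExp hmP hZB_int hA).symm
    _ = ∫ x in A, Z x * μ[B.indicator (fun _ => (1 : ℝ)) | m'] x ∂μ := by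
        refine setIntegral_congr_ae (hmP A hA) ?_
        filter_upwards [condExp_mul_of_stronglyMeasurable_left hZm hZB_int
          ((integrable_const 1).indicator (hmF B hB)),
          h.condExp_indicator_ae_eq hm'P hmP hmF hB] with x hx hx' _
        rw [hx, Pi.mul_apply, hx']

theorem CondIndepGiven.condExp_sup_ae_eq (h : CondIndepGiven μ m' mP mF)
    (hm'A : m' ≤ mA) (hAP : mA ≤ mP) (hBF : mB ≤ mF) (hmP : mP ≤ m0) (hmF : mF ≤ m0)
    {X : Ω → ℝ} (hX : Integrable X μ) (hXm : StronglyMeasurable[mP] X) :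
    μ[X | mA ⊔ mB] =ᵐ[μ] μ[X | mA] := by
  have hmA : mA ≤ m0 := hAP.trans hmP
  have hmAB : mA ⊔ mB ≤ m0 := sup_le hmA (hBF.trans hmF)
  refine (ae_eq_condExp_of_forall_setIntegral_eq hmAB hX
    (fun _ _ _ => integrable_condExp.integrableOn) (fun t ht _ => ?_)
    (stronglyMeasurable_condExp.mono (le_sup_left : mA ≤ mA ⊔ mB)).aestronglyMeasurable).symm
  refine setIntegral_eq_of_isPiSystem hmAB (sup_eq_generateFrom_inter_measurableSet mA mB)
    (isPiSystem_inter_measurableSet mA mB) integrable_condExp hX (integral_condExp hmA) ?_ ht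
  rintro _ ⟨A, B, hA, hB, rfl⟩
  set g := μ[B.indicator (fun _ => (1 : ℝ)) | m']
  have hg_bdd : ∀ᵐ x ∂μ, ‖g x‖ ≤ 1 := by
    refine ae_bdd_abs_condExp_of_ae_bdd_abs (Eventually.of_forall fun x => ?_)
    by_cases hx : x ∈ B <;> simp [hx]
  have hXg : Integrable (X * g) μ :=
    hX.mul_bdd (stronglyMeasurable_condExp.mono (hm'A.trans hmA)).aestronglyMeasurable hg_bdd
  rw [h.setIntegral_inter_eq (hm'A.trans hAP) hmP hmF (hAP A hA) (hBF B hB) integrable_condExp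
      (stronglyMeasurable_condExp.mono hAP),
    h.setIntegral_inter_eq (hm'A.trans hAP) hmP hmF (hAP A hA) (hBF B hB) hX hXm]
  calc ∫ x in A, μ[X | mA] x * g x ∂μ = ∫ x in A, μ[X * g | mA] x ∂μ :=
        setIntegral_congr_ae (hmA A hA) ((condExp_mul_of_stronglyMeasurable_right
          (stronglyMeasurable_condExp.mono hm'A) hXg hX).mono fun x hx _ => hx.symm)
    _ = ∫ x in A, X x * g x ∂μ := setIntegral_condExp hmA hXg hA

theorem CondIndepGiven.eLpNorm_condExp_le (h : CondIndepGiven μ m' mP mF)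
    (hm'A : m' ≤ mA) (hAP : mA ≤ mP) (hBF : mB ≤ mF) (hmP : mP ≤ m0) (hmF : mF ≤ m0)
    (hm : m ≤ mA ⊔ mB) {X : Ω → ℝ} (hX : Integrable X μ) (hXm : StronglyMeasurable[mP] X)
    {p : ℝ≥0∞} (hp : 1 ≤ p) :
    eLpNorm (μ[X | m]) p μ ≤ eLpNorm (μ[X | mA]) p μ := by
  have hmAB : mA ⊔ mB ≤ m0 := sup_le (hAP.trans hmP) (hBF.trans hmF)
  rw [eLpNorm_congr_ae ((condExp_condExp_of_le hm hmAB).symm.trans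
    (condExp_congr_ae (h.condExp_sup_ae_eq hm'A hAP hBF hmP hmF hX hXm)))]
  exact eLpNorm_condExp_le_eLpNorm _ hp

end CondIndepGiven

section Transport

variable {Ω Ω' : Type*} {m' : MeasurableSpace Ω'} [MeasurableSpace Ω] [m0' : MeasurableSpace Ω']
  {μ : Measure Ω} [IsFiniteMeasure μ] {T : Ω → Ω'} {H : Ω' → ℝ}

theorem condExp_comp_comap_ae_eq (hT : Measurable T) (hm' : m' ≤ m0')
    (hH : Integrable H (μ.map T)) :
    μ[H ∘ T | m'.comap T] =ᵐ[μ] (μ.map T)[H | m'] ∘ T := by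
  have hsm : AEStronglyMeasurable ((μ.map T)[H | m']) (μ.map T) :=
    (stronglyMeasurable_condExp.mono hm').aestronglyMeasurable
  refine (ae_eq_condExp_of_forall_setIntegral_eq ((MeasurableSpace.comap_mono hm').trans
      hT.comap_le) ((integrable_map_measure hH.1 hT.aemeasurable).mp hH)
    (fun _ _ _ => ((integrable_map_measure hsm hT.aemeasurable).mp integrable_condExp).integrableOn)
    ?_ (stronglyMeasurable_condExp.comp_measurable (comap_measurable T)).aestronglyMeasurable).symm
  rintro _ ⟨t, ht, rfl⟩ -
  exact (setIntegral_map (hm' t ht) hsm hT.aemeasurable).symm.trans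
    ((setIntegral_condExp hm' hH ht).trans (setIntegral_map (hm' t ht) hH.1 hT.aemeasurable))

theorem eLpNorm_condExp_comp_comap (hT : Measurable T) (hm' : m' ≤ m0')
    (hH : Integrable H (μ.map T)) (p : ℝ≥0∞) :
    eLpNorm (μ[H ∘ T | m'.comap T]) p μ = eLpNorm ((μ.map T)[H | m']) p (μ.map T) := by
  rw [eLpNorm_congr_ae (condExp_comp_comap_ae_eq hT hm' hH), eLpNorm_map_measure
    (stronglyMeasurable_condExp.mono hm').aestronglyMeasurable hT.aemeasurable]

end Transport

theorem eLpNorm_condExp_add_le {Ω : Type*} {m : MeasurableSpace Ω} [MeasurableSpace Ω]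
    {μ : Measure Ω} {X Y : Ω → ℝ} (hX : Integrable X μ) (hY : Integrable Y μ) {p : ℝ≥0∞}
    (hp : 1 ≤ p) :
    eLpNorm (μ[X + Y | m]) p μ ≤ eLpNorm (μ[X | m]) p μ + eLpNorm (μ[Y | m]) p μ := by
  rw [eLpNorm_congr_ae (condExp_add hX hY m)]
  exact eLpNorm_add_le integrable_condExp.1 integrable_condExp.1 hp

section Chain

variable {Ω Ω' S : Type*} [MeasurableSpace S] {ξ : ℤ → Ω → S} {f : S → ℝ}

theorem comap_le_sigmaOf {I : Set ℤ} {k : ℤ} (hk : k ∈ I) :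
    MeasurableSpace.comap (ξ k) inferInstance ≤ sigmaOf ξ I :=
  le_iSup₂ (f := fun k (_ : k ∈ I) => MeasurableSpace.comap (ξ k) inferInstance) k hk

theorem pairSigma_le_sigmaOf {I : Set ℤ} {i j : ℤ} (hi : i ∈ I) (hj : j ∈ I) :
    pairSigma ξ i j ≤ sigmaOf ξ I :=
  sup_le (comap_le_sigmaOf hi) (comap_le_sigmaOf hj)

theorem pairSigma_comap (ζ : ℤ → Ω' → S) (T : Ω → Ω') (i j : ℤ) :
    (pairSigma ζ i j).comap T = pairSigma (fun k => ζ k ∘ T) i j := by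
  simp only [pairSigma, MeasurableSpace.comap_sup, MeasurableSpace.comap_comp]

theorem stronglyMeasurable_sum_sigmaOf {ι : Type*} (hf : Measurable f) {I : Set ℤ}
    {s : Finset ι} {g : ι → ℤ} (hs : ∀ i ∈ s, g i ∈ I) :
    StronglyMeasurable[sigmaOf ξ I] fun ω => ∑ i ∈ s, f (ξ (g i) ω) :=
  (Finset.measurable_sum s fun i hi => (hf.comp (comap_measurable (ξ (g i)))).mono
    (comap_le_sigmaOf (hs i hi)) le_rfl).stronglyMeasurable

variable [MeasurableSpace Ω] {μ : Measure Ω}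

theorem sigmaOf_le (hmeas : ∀ n, Measurable (ξ n)) (I : Set ℤ) :
    sigmaOf ξ I ≤ ‹MeasurableSpace Ω› :=
  iSup₂_le fun k _ => (hmeas k).comap_le

theorem pairSigma_le (hmeas : ∀ n, Measurable (ξ n)) (i j : ℤ) :
    pairSigma ξ i j ≤ ‹MeasurableSpace Ω› :=
  sup_le (hmeas i).comap_le (hmeas j).comap_le

theorem IsStationaryZ.map_shift (hmeas : ∀ n, Measurable (ξ n)) (hstat : IsStationaryZ μ ξ)
    (k : ℕ) : μ.map (fun ω (j : ℤ) => ξ (j + k) ω) = μ.map (fun ω j => ξ j ω) := by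
  induction k with
  | zero => simp
  | succ k ih =>
    have hshift : Measurable fun (x : ℤ → S) (j : ℤ) => x (j + k) :=
      measurable_pi_lambda _ fun j => measurable_pi_apply _
    calc μ.map (fun ω (j : ℤ) => ξ (j + ↑(k + 1)) ω)
        = (μ.map fun ω (j : ℤ) => ξ (j + 1) ω).map fun x j => x (j + k) := by
          rw [Measure.map_map hshift (measurable_pi_lambda _ fun j => hmeas _)]
          congr 1
          funext ω j
          simp only [Function.comp_apply]
          congr 1
          push_cast
          ring
      _ = μ.map (fun ω (j : ℤ) => ξ j ω) := by
          rw [hstat, Measure.map_map hshift (measurable_pi_lambda _ hmeas)]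
          exact ih

theorem IsStationaryZ.map_eq (hmeas : ∀ n, Measurable (ξ n)) (hstat : IsStationaryZ μ ξ)
    (k : ℕ) : μ.map (ξ k) = μ.map (ξ 0) := by
  have h := congrArg (Measure.map fun x : ℤ → S => x 0) (hstat.map_shift hmeas k)
  rw [Measure.map_map (measurable_pi_apply 0) (measurable_pi_lambda _ fun j => hmeas _),
    Measure.map_map (measurable_pi_apply 0) (measurable_pi_lambda _ hmeas)] at h
  simpa only [Function.comp_def, zero_add] using h

theorem IsStationaryZ.integrable_comp (hmeas : ∀ n, Measurable (ξ n)) (hstat : IsStationaryZ μ ξ)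
    (hf : Measurable f) (h0 : Integrable (fun ω => f (ξ 0 ω)) μ) (k : ℕ) :
    Integrable (fun ω => f (ξ k ω)) μ := by
  have h := (integrable_map_measure hf.aestronglyMeasurable (hmeas 0).aemeasurable).2 h0
  exact (integrable_map_measure hf.aestronglyMeasurable (hmeas k).aemeasurable).1
    (hstat.map_eq hmeas k ▸ h)

variable [IsFiniteMeasure μ]

theorem IsMarkovChain.eLpNorm_condExp_pairSigma_le_of_past (hmeas : ∀ n, Measurable (ξ n))
    (hmarkov : IsMarkovChain μ ξ) {i j k : ℤ} (hij : i ≤ j) (hjk : j ≤ k) {X : Ω → ℝ}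
    (hX : Integrable X μ) (hXm : StronglyMeasurable[sigmaOf ξ {l | l ≤ j}] X) {p : ℝ≥0∞}
    (hp : 1 ≤ p) :
    eLpNorm (μ[X | pairSigma ξ i k]) p μ ≤ eLpNorm (μ[X | pairSigma ξ i j]) p μ :=
  (hmarkov j).eLpNorm_condExp_le le_sup_right (pairSigma_le_sigmaOf hij (show j ≤ j from le_rfl))
    (comap_le_sigmaOf (show j ≤ k from hjk)) (sigmaOf_le hmeas _) (sigmaOf_le hmeas _)
    (sup_le_sup_right le_sup_left _) hX hXm hp

theorem IsMarkovChain.eLpNorm_condExp_pairSigma_le_of_future (hmeas : ∀ n, Measurable (ξ n))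
    (hmarkov : IsMarkovChain μ ξ) {i j k : ℤ} (hij : i ≤ j) (hjk : j ≤ k) {X : Ω → ℝ}
    (hX : Integrable X μ) (hXm : StronglyMeasurable[sigmaOf ξ {l | j ≤ l}] X) {p : ℝ≥0∞}
    (hp : 1 ≤ p) :
    eLpNorm (μ[X | pairSigma ξ i k]) p μ ≤ eLpNorm (μ[X | pairSigma ξ j k]) p μ :=
  (hmarkov j).symm.eLpNorm_condExp_le le_sup_left
    (pairSigma_le_sigmaOf (show j ≤ j from le_rfl) hjk)
    (comap_le_sigmaOf (show i ≤ j from hij)) (sigmaOf_le hmeas _) (sigmaOf_le hmeas _)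
    (sup_le le_sup_right (le_sup_right.trans le_sup_left)) hX hXm hp

theorem IsStationaryZ.eLpNorm_condExp_shift (hmeas : ∀ n, Measurable (ξ n))
    (hstat : IsStationaryZ μ ξ) (k : ℕ) (a b : ℤ) {H : (ℤ → S) → ℝ}
    (hH : Integrable H (μ.map fun ω j => ξ j ω)) (p : ℝ≥0∞) :
    eLpNorm (μ[fun ω => H fun j => ξ (j + k) ω | pairSigma ξ (a + k) (b + k)]) p μ =
      eLpNorm (μ[fun ω => H fun j => ξ j ω | pairSigma ξ a b]) p μ := by
  have hpair := pairSigma_le (ξ := fun j (x : ℤ → S) => x j) measurable_pi_apply a b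
  have h₁ := eLpNorm_condExp_comp_comap (measurable_pi_lambda _ fun j => hmeas (j + k)) hpair
    (hstat.map_shift hmeas k ▸ hH) p
  have h₀ := eLpNorm_condExp_comp_comap (measurable_pi_lambda _ hmeas) hpair hH p
  rw [pairSigma_comap, hstat.map_shift hmeas k] at h₁
  rw [pairSigma_comap] at h₀
  exact h₁.trans h₀.symm

theorem IsStationaryZ.eLpNorm_condExp_blockSum (hmeas : ∀ n, Measurable (ξ n))
    (hstat : IsStationaryZ μ ξ) (hf : Measurable f)
    (h0 : Integrable (fun ω => f (ξ 0 ω)) μ) (n m : ℕ) (p : ℝ≥0∞) :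
    eLpNorm (μ[fun ω => ∑ i ∈ Finset.Icc 1 m, f (ξ (i + n) ω) | pairSigma ξ n (n + m)]) p μ =
      eLpNorm (μ[pS ξ f m | pairSigma ξ 0 m]) p μ := by
  let H : (ℤ → S) → ℝ := fun x => ∑ i ∈ Finset.Icc 1 m, f (x i)
  have hH : Integrable H (μ.map fun ω j => ξ j ω) := by
    refine (integrable_map_measure ?_ (measurable_pi_lambda _ hmeas).aemeasurable).2
      (integrable_finsetSum _ fun i _ => hstat.integrable_comp hmeas hf h0 i)
    exact (Finset.measurable_sum _ fun i _ => hf.comp (measurable_pi_apply _)).aestronglyMeasurable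
  have h := hstat.eLpNorm_condExp_shift hmeas n 0 m hH p
  rw [zero_add] at h
  rwa [add_comm (n : ℤ)]

end Chain

theorem stmt11_general {Ω S : Type*} [MeasurableSpace Ω] [MeasurableSpace S]
    (μ : Measure Ω) [IsProbabilityMeasure μ] (ξ : ℤ → Ω → S)
    (hmeas : ∀ n, Measurable (ξ n))
    (hstat : IsStationaryZ μ ξ) (hmarkov : IsMarkovChain μ ξ)
    (f : S → ℝ) (hf : Measurable f)
    (hL2 : MemLp (fun ω => f (ξ 0 ω)) 2 μ) :
    ∀ m n : ℕ, 1 ≤ m → 1 ≤ n →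
      eLpNorm (μ[pS ξ f (n + m) | pairSigma ξ 0 (n + m)]) 2 μ ≤
        eLpNorm (μ[pS ξ f n | pairSigma ξ 0 n]) 2 μ +
          eLpNorm (μ[pS ξ f m | pairSigma ξ 0 m]) 2 μ := by
  intro m n _ _
  have hint := hstat.integrable_comp hmeas hf (hL2.integrable one_le_two)
  have hpS : Integrable (pS ξ f n) μ := integrable_finsetSum _ fun i _ => hint i
  set tail : Ω → ℝ := fun ω => ∑ i ∈ Finset.Icc 1 m, f (ξ (i + n) ω)
  have htail : Integrable tail μ :=
    integrable_finsetSum _ fun i _ => by simpa using hint (i + n)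
  have hsplit : pS ξ f (n + m) = pS ξ f n + tail := by
    funext ω
    simp only [pS, Pi.add_apply, tail, Finset.sum_Icc_one_add _ n m, Nat.cast_add]
  calc eLpNorm (μ[pS ξ f (n + m) | pairSigma ξ 0 (n + m)]) 2 μ
      ≤ eLpNorm (μ[pS ξ f n | pairSigma ξ 0 (n + m)]) 2 μ +
          eLpNorm (μ[tail | pairSigma ξ 0 (n + m)]) 2 μ :=
        hsplit ▸ eLpNorm_condExp_add_le hpS htail one_le_two
    _ ≤ eLpNorm (μ[pS ξ f n | pairSigma ξ 0 n]) 2 μ +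
          eLpNorm (μ[tail | pairSigma ξ n (n + m)]) 2 μ := by
        gcongr
        · exact hmarkov.eLpNorm_condExp_pairSigma_le_of_past hmeas (by positivity) (by omega) hpS
            (stronglyMeasurable_sum_sigmaOf hf
              fun i hi => show (i : ℤ) ≤ n from Nat.cast_le.2 (Finset.mem_Icc.1 hi).2) one_le_two
        · exact hmarkov.eLpNorm_condExp_pairSigma_le_of_future hmeas (by positivity) (by omega)
            htail (stronglyMeasurable_sum_sigmaOf hf
              fun i _ => show (n : ℤ) ≤ i + n from le_add_of_nonneg_left i.cast_nonneg) one_le_two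
    _ = _ := by rw [hstat.eLpNorm_condExp_blockSum hmeas hf (hL2.integrable one_le_two) n m]

theorem stmt11 {Ω S : Type*} [MeasurableSpace Ω] [MeasurableSpace S]
    (μ : Measure Ω) [IsProbabilityMeasure μ] (ξ : ℤ → Ω → S)
    (hmeas : ∀ n, Measurable (ξ n))
    (hstat : IsStationaryZ μ ξ) (hmarkov : IsMarkovChain μ ξ)
    (f : S → ℝ) (hf : Measurable f)
    (hmean : ∫ ω, f (ξ 0 ω) ∂μ = 0)
    (hL2 : MemLp (fun ω => f (ξ 0 ω)) 2 μ) :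
    ∀ m n : ℕ, 1 ≤ m → 1 ≤ n →
      eLpNorm (μ[pS ξ f (n + m) | pairSigma ξ 0 (n + m)]) 2 μ ≤
        eLpNorm (μ[pS ξ f n | pairSigma ξ 0 n]) 2 μ +
          eLpNorm (μ[pS ξ f m | pairSigma ξ 0 m]) 2 μ :=
  stmt11_general μ ξ hmeas hstat hmarkov f hf hL2

end
end

section
/- Let (a_i)_{i≥1} be a sequence of real numbers. Then for every positive integer m, ∑_{k=1}^{m} (1/k²) (∑_{i=1}^{k} a_i)² ≤ 4 ∑_{i=1}^{m} a_i². -/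
open MeasureTheory ProbabilityTheory Filter
open scoped ENNReal NNReal Topology

noncomputable section

theorem stmt13 (a : ℕ → ℝ) (m : ℕ) (hm : 1 ≤ m) :
    ∑ k ∈ Finset.Icc 1 m, (∑ i ∈ Finset.Icc 1 k, a i) ^ 2 / (k : ℝ) ^ 2 ≤
      4 * ∑ i ∈ Finset.Icc 1 m, a i ^ 2 := by
  set b : ℕ → ℝ := fun k => (∑ i ∈ Finset.Icc 1 k, a i) / k with hb
  have hrw : ∀ k : ℕ, (∑ i ∈ Finset.Icc 1 k, a i) ^ 2 / (k : ℝ) ^ 2 = (b k) ^ 2 := by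
    intro k; rw [hb]; simp [div_pow]
  rw [Finset.sum_congr rfl fun k _ => hrw k]
  have hmulb : ∀ k : ℕ, (k : ℝ) * b k = ∑ i ∈ Finset.Icc 1 k, a i := by
    intro k
    rcases Nat.eq_zero_or_pos k with hk | hk
    · subst hk; simp
    · rw [hb]
      field_simp
  have hS : ∀ n : ℕ, ∑ i ∈ Finset.Icc 1 (n + 1), a i = (∑ i ∈ Finset.Icc 1 n, a i) + a (n + 1) := by
    intro n
    exact Finset.sum_Icc_succ_top (by omega) a
  -- key summation-by-parts inequality
  have hkey : ∀ n : ℕ,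
      ∑ k ∈ Finset.Icc 1 n, ((b k) ^ 2 - 2 * a k * b k) ≤ -(n : ℝ) * (b n) ^ 2 := by
    intro n
    induction n with
    | zero => simp [hb]
    | succ n ih =>
      rw [Finset.sum_Icc_succ_top (by omega)]
      have ha : a (n + 1) = ((n : ℝ) + 1) * b (n + 1) - (n : ℝ) * b n := by
        have h1 := hmulb (n + 1)
        have h2 := hmulb n
        push_cast at h1
        rw [hS n] at h1
        linarith
      have hterm : (b (n + 1)) ^ 2 - 2 * a (n + 1) * b (n + 1) ≤
          -((n : ℝ) + 1) * (b (n + 1)) ^ 2 + (n : ℝ) * (b n) ^ 2 := by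
        rw [ha]
        nlinarith [sq_nonneg (b (n + 1) - b n), Nat.cast_nonneg (α := ℝ) n]
      push_cast
      nlinarith
  set T := ∑ k ∈ Finset.Icc 1 m, (b k) ^ 2 with hT
  set A := ∑ k ∈ Finset.Icc 1 m, a k ^ 2 with hA
  set P := ∑ k ∈ Finset.Icc 1 m, a k * b k with hP
  have hTnonneg : 0 ≤ T := Finset.sum_nonneg fun k _ => sq_nonneg _
  have hAnonneg : 0 ≤ A := Finset.sum_nonneg fun k _ => sq_nonneg _
  have h1 : T ≤ 2 * P := by
    have := hkey m
    rw [Finset.sum_sub_distrib] at this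
    have hmn : -(m : ℝ) * (b m) ^ 2 ≤ 0 := by
      have : (0:ℝ) ≤ (m : ℝ) * (b m) ^ 2 := by positivity
      linarith
    have hsum : ∑ k ∈ Finset.Icc 1 m, 2 * a k * b k = 2 * P := by
      rw [hP, Finset.mul_sum]; exact Finset.sum_congr rfl fun k _ => by ring
    rw [hsum] at this
    linarith
  have h2 : P ^ 2 ≤ A * T :=
    Finset.sum_mul_sq_le_sq_mul_sq _ _ _
  rcases eq_or_lt_of_le hTnonneg with h | h
  · linarith
  · nlinarith
end
end

section
/- Let (ξ_n)_{n∈ℤ} be a stationary Markov chain and f ∈ L²_0(π). Then ∑_{n≥1} ‖E(S_n|ξ_0)‖²/n² ≤ 4 ∑_{k≥1} ‖E(X_k|ξ_0)‖², where both sides are allowed to be infinite; in particular ∑_{k≥1} ‖E(X_k|ξ_0)‖² < ∞ implies ∑_{n≥1} ‖E(S_n|ξ_0)‖²/n² < ∞. -/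
open MeasureTheory ProbabilityTheory Filter
open scoped ENNReal NNReal Topology

noncomputable section

/-!
Write `a k = ‖E(X_{k+1} | ξ 0)‖`. Linearity of conditional expectation and the triangle
inequality in `L²` give `‖E(S_{n+1} | ξ 0)‖ ≤ a 0 + ⋯ + a n`; stationarity is what puts every
`X_k` in `L²`, so that the linearity applies. The claim is then the discrete Hardy inequality
`∑ bₙ² ≤ 4 ∑ aₙ²` for the Cesàro averages `bₙ = (a 0 + ⋯ + a n) / (n + 1)`: from
`aₙ = (n + 1) bₙ - n bₙ₋₁` one gets `bₙ² - 2 aₙ bₙ ≤ n bₙ₋₁² - (n + 1) bₙ²`, which telescopes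
to `∑ bₙ² ≤ 2 ∑ aₙ bₙ`, and Cauchy–Schwarz finishes.
-/

open Finset

def cesaroAvg (a : ℕ → ℝ) (n : ℕ) : ℝ := (∑ k ∈ range (n + 1), a k) / (n + 1)

lemma cesaroAvg_mul (a : ℕ → ℝ) (n : ℕ) :
    cesaroAvg a n * (n + 1) = ∑ k ∈ range (n + 1), a k :=
  div_mul_cancel₀ _ (by positivity)

-- At `n = 0` the truncated `n - 1` is harmless: its term carries the factor `n`.
lemma eq_cesaroAvg_sub (a : ℕ → ℝ) (n : ℕ) :
    a n = (n + 1) * cesaroAvg a n - n * cesaroAvg a (n - 1) := by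
  cases n with
  | zero => simp [cesaroAvg]
  | succ n =>
    rw [mul_comm, cesaroAvg_mul, Nat.add_sub_cancel, mul_comm, Nat.cast_add_one, cesaroAvg_mul,
      sum_range_succ]
    ring

lemma sq_cesaroAvg_sub_le (a : ℕ → ℝ) (n : ℕ) :
    cesaroAvg a n ^ 2 - 2 * a n * cesaroAvg a n ≤
      n * cesaroAvg a (n - 1) ^ 2 - (n + 1) * cesaroAvg a n ^ 2 := by
  rw [eq_cesaroAvg_sub a n]
  nlinarith [mul_nonneg (Nat.cast_nonneg n : (0 : ℝ) ≤ n)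
    (sq_nonneg (cesaroAvg a n - cesaroAvg a (n - 1)))]

lemma sum_sq_cesaroAvg_le_two_mul (a : ℕ → ℝ) (N : ℕ) :
    ∑ n ∈ range N, cesaroAvg a n ^ 2 ≤ 2 * ∑ n ∈ range N, a n * cesaroAvg a n := by
  have telescope := sum_range_sub' (fun n : ℕ => (n : ℝ) * cesaroAvg a (n - 1) ^ 2) N
  have summed := sum_le_sum fun n (_ : n ∈ range N) => sq_cesaroAvg_sub_le a n
  simp only [Nat.cast_add_one, Nat.add_sub_cancel] at telescope
  rw [telescope, sum_sub_distrib] at summed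
  simp only [mul_assoc, ← mul_sum, Nat.cast_zero, zero_mul] at summed
  nlinarith [mul_nonneg (Nat.cast_nonneg N : (0 : ℝ) ≤ N) (sq_nonneg (cesaroAvg a (N - 1)))]

theorem sum_sq_cesaroAvg_le_four_mul (a : ℕ → ℝ) (N : ℕ) :
    ∑ n ∈ range N, cesaroAvg a n ^ 2 ≤ 4 * ∑ n ∈ range N, a n ^ 2 := by
  have h2 := sum_sq_cesaroAvg_le_two_mul a N
  have hCS := sum_mul_sq_le_sq_mul_sq (range N) a (cesaroAvg a)
  have hA : 0 ≤ ∑ n ∈ range N, a n ^ 2 := sum_nonneg fun n _ => sq_nonneg _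
  have hB : 0 ≤ ∑ n ∈ range N, cesaroAvg a n ^ 2 := sum_nonneg fun n _ => sq_nonneg _
  nlinarith

theorem ENNReal.sum_range_sq_sum_div_le (a : ℕ → ℝ≥0∞) (ha : ∀ n, a n ≠ ∞) (N : ℕ) :
    ∑ n ∈ range N, (∑ k ∈ range (n + 1), a k) ^ 2 / ((n : ℝ≥0∞) + 1) ^ 2 ≤
      4 * ∑ n ∈ range N, a n ^ 2 := by
  lift a to ℕ → ℝ≥0 using ha
  have hterm : ∀ n : ℕ, (∑ k ∈ range (n + 1), (a k : ℝ≥0∞)) ^ 2 / ((n : ℝ≥0∞) + 1) ^ 2 =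
      ((((∑ k ∈ range (n + 1), a k) / (n + 1)) ^ 2 : ℝ≥0) : ℝ≥0∞) := by
    intro n
    rw [div_pow, ENNReal.coe_div (by positivity)]
    push_cast
    rfl
  simp_rw [hterm]
  exact_mod_cast (NNReal.coe_le_coe.1 (by push_cast; exact sum_sq_cesaroAvg_le_four_mul (fun k => a k) N))

theorem ENNReal.tsum_sq_sum_div_le (a : ℕ → ℝ≥0∞) :
    ∑' n : ℕ, (∑ k ∈ range (n + 1), a k) ^ 2 / ((n : ℝ≥0∞) + 1) ^ 2 ≤ 4 * ∑' n, a n ^ 2 := by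
  by_cases ha : ∀ n, a n ≠ ∞
  · refine ENNReal.tsum_le_of_sum_range_le fun N => ?_
    grw [ENNReal.sum_range_sq_sum_div_le a ha N, ENNReal.sum_le_tsum (range N)]
  · obtain ⟨m, hm⟩ := not_forall_not.1 ha
    have htop : ∑' n, a n ^ 2 = ∞ := ENNReal.tsum_eq_top_of_eq_top ⟨m, by simp [hm]⟩
    rw [htop, ENNReal.mul_top four_ne_zero]
    exact le_top

lemma IsStationaryZ.map_eq_map_zero {Ω S : Type*} [MeasurableSpace Ω] [MeasurableSpace S]
    {μ : Measure Ω} {ξ : ℤ → Ω → S} (hstat : IsStationaryZ μ ξ) (hmeas : ∀ n, Measurable (ξ n))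
    (n : ℤ) : μ.map (ξ n) = μ.map (ξ 0) := by
  have step : ∀ n : ℤ, μ.map (ξ (n + 1)) = μ.map (ξ n) := fun n => by
    have marginal := congrArg (Measure.map fun x : ℤ → S => x n) hstat
    rwa [Measure.map_map (measurable_pi_apply n) (measurable_pi_lambda _ fun m => hmeas (m + 1)),
      Measure.map_map (measurable_pi_apply n) (measurable_pi_lambda _ hmeas)] at marginal
  induction n using Int.induction_on with
  | zero => rfl
  | succ n ih => rw [step, ih]
  | pred n ih => rw [← ih, ← step, sub_add_cancel]

lemma IsStationaryZ.memLp_comp {Ω S E : Type*} [MeasurableSpace Ω] [MeasurableSpace S]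
    [NormedAddCommGroup E] {μ : Measure Ω} {ξ : ℤ → Ω → S} (hstat : IsStationaryZ μ ξ)
    (hmeas : ∀ n, Measurable (ξ n)) {f : S → E} (hf : StronglyMeasurable f)
    {p : ℝ≥0∞} (hf0 : MemLp (fun ω => f (ξ 0 ω)) p μ) (n : ℤ) :
    MemLp (fun ω => f (ξ n ω)) p μ := by
  have hf0_law := (memLp_map_measure_iff hf.aestronglyMeasurable (hmeas 0).aemeasurable).2 hf0
  rw [← hstat.map_eq_map_zero hmeas n] at hf0_law
  exact (memLp_map_measure_iff hf.aestronglyMeasurable (hmeas n).aemeasurable).1 hf0_law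

lemma eLpNorm_condExp_sum_le {Ω ι E : Type*} [NormedAddCommGroup E] [NormedSpace ℝ E]
    [CompleteSpace E] {m m₀ : MeasurableSpace Ω} {μ : Measure Ω}
    (hm : m ≤ m₀) {p : ℝ≥0∞} (hp : 1 ≤ p) {s : Finset ι} {g : ι → Ω → E}
    (hg : ∀ i ∈ s, Integrable (g i) μ) :
    eLpNorm (μ[∑ i ∈ s, g i | m]) p μ ≤ ∑ i ∈ s, eLpNorm (μ[g i | m]) p μ := by
  rw [eLpNorm_congr_ae (condExp_finsetSum hg m)]
  exact eLpNorm_sum_le (fun i _ => (stronglyMeasurable_condExp.mono hm).aestronglyMeasurable) hp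

lemma pS_eq_sum_range {Ω S : Type*} (ξ : ℤ → Ω → S) (f : S → ℝ) (n : ℕ) :
    pS ξ f n = ∑ k ∈ range n, fun ω => f (ξ ((k : ℤ) + 1) ω) := by
  ext ω
  rw [pS, Finset.sum_apply, range_eq_Ico, ← Ico_add_one_right_eq_Icc]
  simpa using (sum_Ico_add' (fun i : ℕ => f (ξ i ω)) 0 n 1).symm

theorem stmt18_general {Ω S : Type*} [MeasurableSpace Ω] [MeasurableSpace S]
    (μ : Measure Ω) [IsProbabilityMeasure μ] (ξ : ℤ → Ω → S)
    (hmeas : ∀ n, Measurable (ξ n))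
    (hstat : IsStationaryZ μ ξ)
    (f : S → ℝ) (hf : Measurable f)
    (hL2 : MemLp (fun ω => f (ξ 0 ω)) 2 μ) :
    ∑' n : ℕ, (eLpNorm (μ[pS ξ f (n + 1) |
        MeasurableSpace.comap (ξ 0) inferInstance]) 2 μ) ^ 2 / ((n : ℝ≥0∞) + 1) ^ 2 ≤
      4 * ∑' k : ℕ, (eLpNorm (μ[fun ω => f (ξ ((k : ℤ) + 1) ω) |
        MeasurableSpace.comap (ξ 0) inferInstance]) 2 μ) ^ 2 := by
  have hint : ∀ k : ℕ, Integrable (fun ω => f (ξ ((k : ℤ) + 1) ω)) μ := fun k =>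
    (hstat.memLp_comp hmeas hf.stronglyMeasurable hL2 _).integrable one_le_two
  calc _ ≤ ∑' n : ℕ, (∑ k ∈ range (n + 1), eLpNorm (μ[fun ω => f (ξ ((k : ℤ) + 1) ω) |
          MeasurableSpace.comap (ξ 0) inferInstance]) 2 μ) ^ 2 / ((n : ℝ≥0∞) + 1) ^ 2 := by
        gcongr with n
        rw [pS_eq_sum_range]
        exact eLpNorm_condExp_sum_le (hmeas 0).comap_le one_le_two fun k _ => hint k
    _ ≤ _ := ENNReal.tsum_sq_sum_div_le _

theorem stmt18 {Ω S : Type*} [MeasurableSpace Ω] [MeasurableSpace S]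
    (μ : Measure Ω) [IsProbabilityMeasure μ] (ξ : ℤ → Ω → S)
    (hmeas : ∀ n, Measurable (ξ n))
    (hstat : IsStationaryZ μ ξ) (hmarkov : IsMarkovChain μ ξ)
    (f : S → ℝ) (hf : Measurable f)
    (hmean : ∫ ω, f (ξ 0 ω) ∂μ = 0)
    (hL2 : MemLp (fun ω => f (ξ 0 ω)) 2 μ) :
    ∑' n : ℕ, (eLpNorm (μ[pS ξ f (n + 1) |
        MeasurableSpace.comap (ξ 0) inferInstance]) 2 μ) ^ 2 / ((n : ℝ≥0∞) + 1) ^ 2 ≤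
      4 * ∑' k : ℕ, (eLpNorm (μ[fun ω => f (ξ ((k : ℤ) + 1) ω) |
        MeasurableSpace.comap (ξ 0) inferInstance]) 2 μ) ^ 2 :=
  stmt18_general μ ξ hmeas hstat f hf hL2
end
end
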